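/- Let γ = [0; 1, 1, c_3, 1, c_5, 1, c_7, …] be irrational with c_{2n} = 1 for all n, c_1 = 1, and c_{2n+1} ∈ {1,2} for n ≥ 1. Then for every m ∈ ℕ, m(mγ⁻¹ - ⌊mγ⁻¹⌋) > 1/3. -/

import Mathlib

/-- Numerator of the `n`-th convergent of the continued fraction with
partial quotients `c`. -/
def convP (c : ℕ → ℤ) : ℕ → ℤ
  | 0 => c 0
  | 1 => c 1 * c 0 + 1
  | (n + 2) => c (n + 2) * convP c (n + 1) + convP c n

/-- Denominator of the `n`-th convergent of the continued fraction with
partial quotients `c`. -/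
def convQ (c : ℕ → ℤ) : ℕ → ℤ
  | 0 => 1
  | 1 => c 1
  | (n + 2) => c (n + 2) * convQ c (n + 1) + convQ c n

/-- `γ` has (infinite) continued fraction expansion `[c 0; c 1, c 2, ...]`:
all partial quotients with positive index are positive integers, and the
convergents tend to `γ`. -/
def IsCF (γ : ℝ) (c : ℕ → ℤ) : Prop :=
  (∀ n, 1 ≤ n → 1 ≤ c n) ∧
  Filter.Tendsto (fun n => (convP c n : ℝ) / (convQ c n : ℝ)) Filter.atTop (nhds γ)

/-!
Let `P n / Q n` be the convergents of `γ` and `δ n = |Q n γ - P n|` (`convDist`). The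
determinant identity gives `δ n P (n + 1) + δ (n + 1) P n = γ`. Set `θ = m - ⌊m / γ⌋ γ ≥ 0`, so
the claim is `γ < 3 m θ`. Choose `k` with `P k ≤ m < P (k + 1)` and write
`m = a P k + b P (k + 1)`, so that `θ = ± (b δ (k + 1) - a δ k)`. If `b = 0` then `θ ≥ δ k` and
the sign forces `k` odd; otherwise `a` and `b` have opposite signs and `θ ≥ δ k + δ (k + 1)`.
Since `c (k + 1) = 1` for odd `k` and all partial quotients are at most `2`, the identity gives
`γ < 3 P k δ k` in the first case and `γ < 3 P k (δ k + δ (k + 1))` in the second.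
-/

open Filter

theorem exists_le_lt_succ_of_tendsto_atTop {α : Type*} [LinearOrder α] [NoMaxOrder α]
    {f : ℕ → α} (hf : Tendsto f atTop atTop) {m : α} {k₀ : ℕ} (h : f k₀ ≤ m) :
    ∃ k, k₀ ≤ k ∧ f k ≤ m ∧ m < f (k + 1) := by
  by_contra! H
  have hle : ∀ n, f (n + k₀) ≤ m := fun n => by
    induction n with
    | zero => simpa using h
    | succ n ih => rw [Nat.succ_add]; exact H _ (by omega) ih
  obtain ⟨n, hn⟩ := ((tendsto_add_atTop_iff_nat k₀).mpr hf |>.eventually_gt_atTop m).exists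
  exact (hle n).not_gt hn

section Convergents

variable {c : ℕ → ℤ}

theorem convQ_pos (hc : ∀ n, 1 ≤ n → 1 ≤ c n) : ∀ n, 0 < convQ c n
  | 0 => by simp [convQ]
  | 1 => by simp only [convQ]; linarith [hc 1 le_rfl]
  | n + 2 => by
    have := convQ_pos hc n
    have := convQ_pos hc (n + 1)
    have := hc (n + 2) (by omega)
    simp only [convQ]
    nlinarith

theorem convP_nonneg (hc : ∀ n, 1 ≤ n → 1 ≤ c n) (hc0 : 0 ≤ c 0) : ∀ n, 0 ≤ convP c n
  | 0 => hc0
  | 1 => by simp only [convP]; nlinarith [hc 1 le_rfl]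
  | n + 2 => by
    have := convP_nonneg hc hc0 n
    have := convP_nonneg hc hc0 (n + 1)
    have := hc (n + 2) (by omega)
    simp only [convP]
    nlinarith

theorem convP_le_convP_succ (hc : ∀ n, 1 ≤ n → 1 ≤ c n) (hc0 : 0 ≤ c 0) :
    ∀ n, convP c n ≤ convP c (n + 1)
  | 0 => by simp only [convP]; nlinarith [hc 1 le_rfl]
  | n + 1 => by
    have := convP_nonneg hc hc0 n
    have := convP_nonneg hc hc0 (n + 1)
    have := hc (n + 2) (by omega)
    show _ ≤ c (n + 2) * convP c (n + 1) + convP c n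
    nlinarith

theorem convP_succ_pos (hc : ∀ n, 1 ≤ n → 1 ≤ c n) (hc0 : 0 ≤ c 0) (n : ℕ) :
    0 < convP c (n + 1) := by
  have hmono : Monotone (convP c) :=
    monotone_nat_of_le_succ (convP_le_convP_succ hc hc0)
  have h1 : 0 < convP c 1 := by
    simp only [convP]
    nlinarith [hc 1 le_rfl]
  exact h1.trans_le (hmono (by omega))

theorem tendsto_convP_atTop (hc : ∀ n, 1 ≤ n → 1 ≤ c n) (hc0 : 0 ≤ c 0) :
    Tendsto (convP c) atTop atTop := by
  have hlin : ∀ n : ℕ, (n : ℤ) ≤ convP c (n + 2) := by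
    intro n
    induction n with
    | zero => exact convP_nonneg hc hc0 2
    | succ n ih =>
      have := convP_succ_pos hc hc0 n
      have := hc (n + 3) (by omega)
      have := convP_nonneg hc hc0 (n + 2)
      show _ ≤ c (n + 3) * convP c (n + 2) + convP c (n + 1)
      push_cast
      nlinarith
  exact (tendsto_add_atTop_iff_nat 2).mp
    (tendsto_atTop_mono hlin tendsto_natCast_atTop_atTop)

theorem convP_succ_mul_convQ_sub (n : ℕ) :
    convP c (n + 1) * convQ c n - convP c n * convQ c (n + 1) = (-1) ^ n := by
  induction n with
  | zero => simp only [convP, convQ]; ring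
  | succ n ih =>
    simp only [convP, convQ] at ih ⊢
    linear_combination (-1 : ℤ) * ih

theorem convP_add_two_mul_convQ_sub (n : ℕ) :
    convP c (n + 2) * convQ c n - convP c n * convQ c (n + 2) = c (n + 2) * (-1) ^ n := by
  simp only [convP, convQ]
  linear_combination c (n + 2) * convP_succ_mul_convQ_sub (c := c) n

end Convergents

/-- Once `convDist_pos` is known this is `|convQ c n * γ - convP c n|`: the convergents
alternate around `γ`. -/
def convDist (γ : ℝ) (c : ℕ → ℤ) (n : ℕ) : ℝ :=
  (-1) ^ n * (convQ c n * γ - convP c n)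

section Distances

variable {γ : ℝ} {c : ℕ → ℤ}

theorem convDist_add_two (n : ℕ) :
    convDist γ c (n + 2) = convDist γ c n - c (n + 2) * convDist γ c (n + 1) := by
  simp only [convDist, convP, convQ]
  push_cast
  ring

theorem convDist_mul_convP_succ_add (n : ℕ) :
    convDist γ c n * convP c (n + 1) + convDist γ c (n + 1) * convP c n = γ := by
  have hdet := congrArg (Int.cast : ℤ → ℝ) (convP_succ_mul_convQ_sub (c := c) n)
  have hsq : ((-1 : ℝ) ^ n) ^ 2 = 1 := by rw [pow_right_comm]; simp
  push_cast at hdet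
  simp only [convDist, pow_succ]
  linear_combination (γ * (-1) ^ n) * hdet + γ * hsq

theorem neg_one_pow_mul_div_lt (hc : ∀ n, 1 ≤ n → 1 ≤ c n) (n : ℕ) :
    (-1) ^ n * ((convP c n : ℝ) / convQ c n) <
      (-1) ^ n * ((convP c (n + 2) : ℝ) / convQ c (n + 2)) := by
  have hQ : ∀ k, (0 : ℝ) < convQ c k := fun k => by exact_mod_cast convQ_pos hc k
  have hcn : (0 : ℝ) < c (n + 2) := by exact_mod_cast hc (n + 2) (by omega)
  have hdet := congrArg (Int.cast : ℤ → ℝ) (convP_add_two_mul_convQ_sub (c := c) n)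
  push_cast at hdet
  rw [← sub_pos, ← mul_sub, div_sub_div _ _ (hQ _).ne' (hQ _).ne', mul_div_assoc']
  apply div_pos _ (mul_pos (hQ _) (hQ _))
  have hsq : ((-1 : ℝ) ^ n) ^ 2 = 1 := by rw [pow_right_comm]; simp
  linear_combination hcn - (-1 : ℝ) ^ n * hdet - c (n + 2) * hsq

theorem convDist_pos (hcf : IsCF γ c) (n : ℕ) : 0 < convDist γ c n := by
  obtain ⟨hc, hlim⟩ := hcf
  let x : ℕ → ℝ := fun k => (convP c k : ℝ) / convQ c k
  have hsign : ∀ t, (-1 : ℝ) ^ (n + 2 * t) = (-1) ^ n := fun t => by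
    rw [pow_add, pow_mul]; simp
  have hmono : StrictMono fun t => (-1) ^ n * x (n + 2 * t) := by
    refine strictMono_nat_of_lt_succ fun t => ?_
    have h := neg_one_pow_mul_div_lt hc (n + 2 * t)
    rw [hsign] at h
    simpa only [x, Nat.mul_succ, ← add_assoc] using h
  have hshift : Tendsto (fun t => n + 2 * t) atTop atTop :=
    tendsto_atTop_atTop.mpr fun b => ⟨b, fun t ht => by omega⟩
  have hlim' : Tendsto (fun t => (-1) ^ n * x (n + 2 * t)) atTop (nhds ((-1) ^ n * γ)) :=
    (hlim.comp hshift).const_mul _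
  have hlt : (-1) ^ n * x n < (-1) ^ n * γ := by
    have h := (hmono zero_lt_one).trans_le (hmono.monotone.ge_of_tendsto hlim' 1)
    simpa only [mul_zero, add_zero] using h
  have hQ : (0 : ℝ) < convQ c n := by exact_mod_cast convQ_pos hc n
  have hx : x n * convQ c n = convP c n := div_mul_cancel₀ _ hQ.ne'
  have : convDist γ c n = convQ c n * ((-1) ^ n * γ - (-1) ^ n * x n) := by
    simp only [convDist]; rw [← hx]; ring
  rw [this]
  exact mul_pos hQ (sub_pos.mpr hlt)

theorem convDist_succ_lt (hcf : IsCF γ c) (n : ℕ) : convDist γ c (n + 1) < convDist γ c n := by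
  have hpos := convDist_pos hcf (n + 2)
  have hcn : (1 : ℝ) ≤ c (n + 2) := by exact_mod_cast hcf.1 (n + 2) (by omega)
  rw [convDist_add_two] at hpos
  nlinarith [convDist_pos hcf (n + 1)]

theorem exists_sub_mul_eq_convDist (k : ℕ) (m p : ℤ) :
    ∃ a b : ℤ, m = a * convP c k + b * convP c (k + 1) ∧
      (m : ℝ) - p * γ = (-1) ^ k * (b * convDist γ c (k + 1) - a * convDist γ c k) := by
  set a := (-1) ^ k * (p * convP c (k + 1) - m * convQ c (k + 1))
  set b := (-1) ^ k * (m * convQ c k - p * convP c k)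
  have hdet := convP_succ_mul_convQ_sub (c := c) k
  have hsq : ((-1 : ℤ) ^ k) ^ 2 = 1 := by rw [pow_right_comm]; simp
  have hm : m = a * convP c k + b * convP c (k + 1) := by
    linear_combination (-m * (-1) ^ k) * hdet - m * hsq
  have hp : p = a * convQ c k + b * convQ c (k + 1) := by
    linear_combination (-p * (-1) ^ k) * hdet - p * hsq
  refine ⟨a, b, hm, ?_⟩
  have hmR : (m : ℝ) = a * convP c k + b * convP c (k + 1) := by exact_mod_cast hm
  have hpR : (p : ℝ) = a * convQ c k + b * convQ c (k + 1) := by exact_mod_cast hp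
  have hsqR : ((-1 : ℝ) ^ k) ^ 2 = 1 := by rw [pow_right_comm]; simp
  simp only [convDist, pow_succ]
  linear_combination hmR - γ * hpR + (a * (convQ c k * γ - convP c k) +
    b * (convQ c (k + 1) * γ - convP c (k + 1))) * hsqR

theorem convDist_le_sub_mul (hcf : IsCF γ c) (hc0 : 0 ≤ c 0) {k : ℕ} (hk : 0 < k) {m p : ℤ}
    (hPm : convP c k ≤ m) (hmP : m < convP c (k + 1)) (hθ : 0 ≤ (m : ℝ) - p * γ) :
    (Odd k ∧ convDist γ c k ≤ m - p * γ) ∨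
      convDist γ c k + convDist γ c (k + 1) ≤ m - p * γ := by
  obtain ⟨a, b, hm, hθeq⟩ := exists_sub_mul_eq_convDist (γ := γ) (c := c) k m p
  obtain ⟨j, rfl⟩ : ∃ j, k = j + 1 := ⟨k - 1, by omega⟩
  have hPk := convP_succ_pos hcf.1 hc0 j
  have hPk1 := convP_succ_pos hcf.1 hc0 (j + 1)
  have hdk := convDist_pos hcf (j + 1)
  have hdk1 := convDist_pos hcf (j + 2)
  rcases eq_or_ne b 0 with rfl | hb
  · left
    have ha : (1 : ℝ) ≤ a := by exact_mod_cast (show 1 ≤ a by nlinarith)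
    simp only [Int.cast_zero, zero_mul, zero_sub] at hθeq
    rcases neg_one_pow_eq_or ℝ (j + 1) with hpow | hpow <;> rw [hpow] at hθeq
    · nlinarith
    · refine ⟨(neg_one_pow_eq_neg_one_iff_odd (by norm_num)).mp hpow, ?_⟩
      nlinarith
  · right
    have hsigns : (0 < a ∧ b < 0) ∨ (a < 0 ∧ 0 < b) := by
      rcases hb.lt_or_gt with hb | hb
      · exact Or.inl ⟨by nlinarith, hb⟩
      · exact Or.inr ⟨by nlinarith, hb⟩
    have habs : convDist γ c (j + 1) + convDist γ c (j + 2) ≤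
        |b * convDist γ c (j + 2) - a * convDist γ c (j + 1)| := by
      rcases hsigns with ⟨ha, hb⟩ | ⟨ha, hb⟩
      · have ha : (1 : ℝ) ≤ a := by exact_mod_cast ha
        have hb : (b : ℝ) ≤ -1 := by exact_mod_cast Int.le_sub_one_of_lt hb
        exact le_abs.mpr (Or.inr (by nlinarith))
      · have ha : (a : ℝ) ≤ -1 := by exact_mod_cast Int.le_sub_one_of_lt ha
        have hb : (1 : ℝ) ≤ b := by exact_mod_cast hb
        exact le_abs.mpr (Or.inl (by nlinarith))
    rwa [← abs_of_nonneg hθ, hθeq, abs_mul, abs_pow, abs_neg, abs_one, one_pow, one_mul]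

theorem lt_three_mul_convP_mul_convDist (hcf : IsCF γ c) (hc0 : 0 ≤ c 0) {n : ℕ}
    (hcn : c (n + 2) = 1) : γ < 3 * convP c (n + 1) * convDist γ c (n + 1) := by
  have hrec := convDist_add_two (γ := γ) (c := c) n
  rw [hcn, Int.cast_one, one_mul] at hrec
  have hd : convDist γ c n < 2 * convDist γ c (n + 1) := by
    linarith [convDist_succ_lt hcf (n + 1)]
  have hP : (convP c n : ℝ) ≤ convP c (n + 1) := by
    exact_mod_cast convP_le_convP_succ hcf.1 hc0 n
  have hPpos : (0 : ℝ) < convP c (n + 1) := by exact_mod_cast convP_succ_pos hcf.1 hc0 n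
  have hid := convDist_mul_convP_succ_add (γ := γ) (c := c) n
  nlinarith [convDist_pos hcf (n + 1)]

theorem lt_three_mul_convP_mul_convDist_add (hcf : IsCF γ c) (hc0 : 0 ≤ c 0) {n : ℕ}
    (hcn : c (n + 2) ≤ 2) :
    γ < 3 * convP c (n + 1) * (convDist γ c (n + 1) + convDist γ c (n + 2)) := by
  have hP : convP c (n + 2) ≤ 3 * convP c (n + 1) := by
    have := convP_le_convP_succ hcf.1 hc0 n
    have := convP_succ_pos hcf.1 hc0 n
    show c (n + 2) * convP c (n + 1) + convP c n ≤ _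
    nlinarith
  have hP : (convP c (n + 2) : ℝ) ≤ 3 * convP c (n + 1) := by exact_mod_cast hP
  have hPpos : (0 : ℝ) < convP c (n + 1) := by exact_mod_cast convP_succ_pos hcf.1 hc0 n
  have hid := convDist_mul_convP_succ_add (γ := γ) (c := c) (n + 1)
  nlinarith [convDist_pos hcf (n + 1), convDist_pos hcf (n + 2)]

theorem lt_three_mul_mul_sub_mul (hcf : IsCF γ c) (hc0 : 0 ≤ c 0)
    (hc_eq_one : ∀ n, 4 ≤ n → Even n → c n = 1) (hc_le_two : ∀ n, 3 ≤ n → c n ≤ 2)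
    {k : ℕ} (hk : 2 ≤ k) {m p : ℤ} (hPm : convP c k ≤ m) (hmP : m < convP c (k + 1))
    (hθ : 0 ≤ (m : ℝ) - p * γ) : γ < 3 * m * (m - p * γ) := by
  obtain ⟨n, rfl⟩ : ∃ n, k = n + 1 := ⟨k - 1, by omega⟩
  have hPm' : (convP c (n + 1) : ℝ) ≤ m := by exact_mod_cast hPm
  have hPpos : (0 : ℝ) < convP c (n + 1) := by exact_mod_cast convP_succ_pos hcf.1 hc0 n
  have hd := convDist_pos hcf (n + 1)
  have hd' := convDist_pos hcf (n + 2)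
  rcases convDist_le_sub_mul hcf hc0 (by omega) hPm hmP hθ with ⟨⟨t, ht⟩, hle⟩ | hle
  · have hcn : c (n + 2) = 1 := hc_eq_one _ (by omega) ⟨t + 1, by omega⟩
    calc γ < 3 * convP c (n + 1) * convDist γ c (n + 1) :=
          lt_three_mul_convP_mul_convDist hcf hc0 hcn
      _ ≤ 3 * m * (m - p * γ) := mul_le_mul (by linarith) hle hd.le (by linarith)
  · calc γ < 3 * convP c (n + 1) * (convDist γ c (n + 1) + convDist γ c (n + 2)) :=
          lt_three_mul_convP_mul_convDist_add hcf hc0 (hc_le_two _ (by omega))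
      _ ≤ 3 * m * (m - p * γ) := mul_le_mul (by linarith) hle (by linarith) (by linarith)

end Distances

theorem stmt_17_general (γ : ℝ) (c : ℕ → ℤ) (hcf : IsCF γ c)
    (hc0 : c 0 = 0)
    (heven : ∀ n, 1 ≤ n → c (2 * n) = 1)
    (hodd : ∀ n, 1 ≤ n → c (2 * n + 1) = 1 ∨ c (2 * n + 1) = 2)
    (m : ℕ) (hm : 0 < m) :
    (m : ℝ) * ((m : ℝ) * γ⁻¹ - (⌊(m : ℝ) * γ⁻¹⌋ : ℝ)) > 1 / 3 := by
  have hγ : 0 < γ := by simpa [convDist, convP, convQ, hc0] using convDist_pos hcf 0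
  set p := ⌊(m : ℝ) * γ⁻¹⌋
  have hθ : 0 ≤ (m : ℝ) - p * γ := by
    have := mul_le_mul_of_nonneg_right (Int.floor_le ((m : ℝ) * γ⁻¹)) hγ.le
    rw [inv_mul_cancel_right₀ hγ.ne'] at this
    linarith
  have hc_eq_one : ∀ n, 4 ≤ n → Even n → c n = 1 := by
    rintro _ hn ⟨t, rfl⟩
    simpa [two_mul] using heven t (by omega)
  have hc_le_two : ∀ n, 3 ≤ n → c n ≤ 2 := by
    intro n hn
    rcases Nat.even_or_odd' n with ⟨t, rfl | rfl⟩
    · rw [heven t (by omega)]; norm_num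
    · rcases hodd t (by omega) with h | h <;> simp [h]
  have hP2 : convP c 2 ≤ m := by
    simp only [convP, hc0, heven 1 le_rfl]
    omega
  obtain ⟨k, hk, hPm, hmP⟩ :=
    exists_le_lt_succ_of_tendsto_atTop (tendsto_convP_atTop hcf.1 hc0.ge) hP2
  have key :=
    lt_three_mul_mul_sub_mul hcf hc0.ge hc_eq_one hc_le_two hk hPm hmP (by simpa using hθ)
  have hgoal : (m : ℝ) * (m * γ⁻¹ - p) = m * (m - p * γ) / γ := by field_simp
  rw [hgoal, gt_iff_lt, lt_div_iff₀ hγ]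
  push_cast at key
  linarith

theorem stmt_17 (γ : ℝ) (hγ : Irrational γ) (c : ℕ → ℤ) (hcf : IsCF γ c)
    (hc0 : c 0 = 0) (hc1 : c 1 = 1)
    (heven : ∀ n, 1 ≤ n → c (2 * n) = 1)
    (hodd : ∀ n, 1 ≤ n → c (2 * n + 1) = 1 ∨ c (2 * n + 1) = 2)
    (m : ℕ) (hm : 0 < m) :
    (m : ℝ) * ((m : ℝ) * γ⁻¹ - (⌊(m : ℝ) * γ⁻¹⌋ : ℝ)) > 1 / 3 :=
  stmt_17_general γ c hcf hc0 heven hodd m hm
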